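/- There is an absolute constant C such that for all α > 0 and all y ∈ ℝ: (i) for every s ∈ (0,1] and every C¹ function h : ℝ → ℝ with h, h' locally integrable, |J_α[h, L_s](y)| ≤ C·s·∫_{|t| ≤ α} ( |h(y+t)| + |h'(y+t)| ) dt; (ii) for all bounded C¹ functions h₁, h₂ : ℝ → ℝ, |J_α[h₁, h₂](y)| ≤ C·( ‖h₁‖_{L^∞}·∫_{|t| ≤ α} ( |h₂(y+t)| + |h₂'(y+t)| ) dt + ‖h₂‖_{L^∞}·∫_{|t| ≤ α} ( |h₁(y+t)| + |h₁'(y+t)| ) dt ). -/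

import Mathlib

open MeasureTheory Real Set Filter

/-- Sliding average `⨍_α f(y) = (1/α) ∫_{y-α}^{y} f(z) dz`. -/
noncomputable def fint (α : ℝ) (f : ℝ → ℝ) (y : ℝ) : ℝ :=
  (1 / α) * ∫ z in (y - α)..y, f z

/-- Finite difference slope `Δ_α f(y) = (f(y) - f(y-α))/α`. -/
noncomputable def slopeOp (α : ℝ) (f : ℝ → ℝ) (y : ℝ) : ℝ :=
  (f y - f (y - α)) / α

/-- The profile `L_s(y) = (2s/π) arctan((1+s²/3) y)`. -/
noncomputable def Ls (s y : ℝ) : ℝ := (2 * s / Real.pi) * Real.arctan ((1 + s ^ 2 / 3) * y)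

/-- `δ_α[f,g](y) = ⨍_α f ⨍_α g - ⨍_{-α} f ⨍_{-α} g`. -/
noncomputable def deltaOp (α : ℝ) (f g : ℝ → ℝ) (y : ℝ) : ℝ :=
  fint α f y * fint α g y - fint (-α) f y * fint (-α) g y

/-- `J_α[f,g](y) = ⨍_α f ⨍_α g - 2 f g + ⨍_{-α} f ⨍_{-α} g`. -/
noncomputable def Jop (α : ℝ) (f g : ℝ → ℝ) (y : ℝ) : ℝ :=
  fint α f y * fint α g y - 2 * f y * g y + fint (-α) f y * fint (-α) g y

/-- The `H¹` norm `(∫ g² + ∫ (g')²)^{1/2}`. -/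
noncomputable def H1norm (g : ℝ → ℝ) : ℝ :=
  Real.sqrt ((∫ y : ℝ, g y ^ 2) + ∫ y : ℝ, deriv g y ^ 2)

/-!
Write `A = ⨍_α f(y)`, `A' = ⨍_{-α} f(y)` and `B, B'` for the same averages of `g`. Then
`J_α[f,g](y) = (A - f(y)) B + (A' - f(y)) B' + f(y) ((B - g(y)) + (B' - g(y)))`.
By the fundamental theorem of calculus an average of a `C¹` function differs from its value at
the endpoint of the window by at most `∫ |h'|` over the window, and averages of `g` are bounded
by `sup |g|`; this is (ii). The profile `L_s` is bounded by `s` and, for `s ≤ 1`, `s`-Lipschitz,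
so `|⨍_{±α} L_s - L_s(y)| ≤ 2 s min(α, 1)`. Finally `|h(y)|` is at most the mean of `|h|` over
`[y, y + m]` plus `∫ |h'|` there; multiplying by `m = min(α, 1) ≤ 1` gives
`min(α, 1) |h(y)| ≤ ∫_{|t| ≤ α} (|h| + |h'|)`, and (i) follows with `C = 5`.
-/

open scoped Interval

theorem abs_intervalAverage_sub_le {f : ℝ → ℝ} {a b c K : ℝ} (hab : a ≠ b)
    (hf : IntervalIntegrable f volume a b) (hK : ∀ x ∈ Ι a b, |f x - c| ≤ K) :
    |(⨍ x in a..b, f x) - c| ≤ K := by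
  have hba : b - a ≠ 0 := sub_ne_zero.mpr hab.symm
  have hcentre : (⨍ x in a..b, f x) - c = (b - a)⁻¹ * ∫ x in a..b, (f x - c) := by
    rw [interval_average_eq, smul_eq_mul,
      intervalIntegral.integral_sub hf intervalIntegrable_const, intervalIntegral.integral_const,
      smul_eq_mul, mul_sub, inv_mul_cancel_left₀ hba]
  calc |(⨍ x in a..b, f x) - c| = |b - a|⁻¹ * ‖∫ x in a..b, (f x - c)‖ := by
        rw [hcentre, abs_mul, abs_inv, Real.norm_eq_abs]
    _ ≤ |b - a|⁻¹ * (K * |b - a|) := by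
        gcongr
        exact intervalIntegral.norm_integral_le_of_norm_le_const hK
    _ = K := by field_simp [abs_ne_zero.mpr hba]

theorem fint_eq_intervalAverage (α : ℝ) (f : ℝ → ℝ) (y : ℝ) :
    fint α f y = ⨍ x in y - α..y, f x := by
  rw [fint, interval_average_eq, sub_sub_cancel, one_div, smul_eq_mul]

theorem fint_neg_eq_intervalAverage (α : ℝ) (f : ℝ → ℝ) (y : ℝ) :
    fint (-α) f y = ⨍ x in y..y + α, f x := by
  rw [fint_eq_intervalAverage, interval_average_symm, sub_neg_eq_add]

theorem abs_fint_sub_le {f : ℝ → ℝ} {α y c K : ℝ} (hα : α ≠ 0)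
    (hf : IntervalIntegrable f volume (y - α) y) (hK : ∀ x ∈ [[y - α, y]], |f x - c| ≤ K) :
    |fint α f y - c| ≤ K := by
  rw [fint_eq_intervalAverage]
  exact abs_intervalAverage_sub_le (by simpa using hα) hf fun x hx => hK x (uIoc_subset_uIcc hx)

theorem abs_fint_le {f : ℝ → ℝ} {M : ℝ} (hf : Continuous f) (hM : ∀ x, |f x| ≤ M) {α : ℝ}
    (hα : α ≠ 0) (y : ℝ) : |fint α f y| ≤ M := by
  simpa using abs_fint_sub_le (c := 0) hα (hf.intervalIntegrable _ _) fun x _ => by simpa using hM x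

theorem abs_sub_le_integral_abs_deriv {h : ℝ → ℝ} (hh : ContDiff ℝ 1 h) {a b x c : ℝ}
    (hx : x ∈ [[a, b]]) (hc : c ∈ [[a, b]]) : |h x - h c| ≤ |∫ z in a..b, (|deriv h z|)| := by
  have hderiv : Continuous (deriv h) := hh.continuous_deriv le_rfl
  rw [← intervalIntegral.integral_deriv_eq_sub (fun z _ => hh.differentiable one_ne_zero z)
    (hderiv.intervalIntegrable c x)]
  calc |∫ z in c..x, deriv h z| ≤ |∫ z in c..x, ‖deriv h z‖| :=
        (Real.norm_eq_abs _).symm.trans_le intervalIntegral.norm_integral_le_abs_integral_norm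
    _ ≤ |∫ z in a..b, (|deriv h z|)| :=
        intervalIntegral.abs_integral_mono_interval
          (uIoc_subset_uIoc_of_uIcc_subset_uIcc (uIcc_subset_uIcc hc hx))
          (Eventually.of_forall fun z => abs_nonneg _) (hderiv.abs.intervalIntegrable a b)

theorem abs_fint_sub_self_le {h : ℝ → ℝ} (hh : ContDiff ℝ 1 h) {α : ℝ} (hα : α ≠ 0) (y : ℝ) :
    |fint α h y - h y| ≤ |∫ z in y - α..y, (|deriv h z|)| :=
  abs_fint_sub_le hα (hh.continuous.intervalIntegrable _ _)
    fun _ hx => abs_sub_le_integral_abs_deriv hh hx right_mem_uIcc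

theorem abs_fint_sub_self_add_abs_fint_neg_sub_self_le {h : ℝ → ℝ} (hh : ContDiff ℝ 1 h) {α : ℝ}
    (hα : 0 < α) (y : ℝ) :
    |fint α h y - h y| + |fint (-α) h y - h y| ≤ ∫ z in y - α..y + α, |deriv h z| := by
  have hint : Continuous fun z => |deriv h z| := (hh.continuous_deriv le_rfl).abs
  have hleft := abs_fint_sub_self_le hh hα.ne' y
  have hright := abs_fint_sub_self_le hh (neg_ne_zero.mpr hα.ne') y
  rw [sub_neg_eq_add, intervalIntegral.integral_symm, abs_neg] at hright
  rw [← intervalIntegral.integral_add_adjacent_intervals (hint.intervalIntegrable _ y)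
    (hint.intervalIntegrable y _)]
  refine add_le_add (hleft.trans_eq (abs_of_nonneg ?_)) (hright.trans_eq (abs_of_nonneg ?_)) <;>
    exact intervalIntegral.integral_nonneg (by linarith) fun _ _ => abs_nonneg _

theorem sub_mul_abs_le_integral_abs_add_abs_deriv {h : ℝ → ℝ} (hh : ContDiff ℝ 1 h) {a b c : ℝ}
    (hab : a < b) (hba : b - a ≤ 1) (hc : c ∈ [[a, b]]) :
    (b - a) * |h c| ≤ ∫ z in a..b, (|h z| + |deriv h z|) := by
  set K := ∫ z in a..b, |deriv h z|
  have hK : 0 ≤ K := intervalIntegral.integral_nonneg hab.le fun _ _ => abs_nonneg _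
  have havg : |(⨍ z in a..b, |h z|) - (|h c|)| ≤ K := by
    refine abs_intervalAverage_sub_le hab.ne (hh.continuous.abs.intervalIntegrable _ _)
      fun x hx => (abs_abs_sub_abs_le_abs_sub _ _).trans ?_
    exact (abs_sub_le_integral_abs_deriv hh (uIoc_subset_uIcc hx) hc).trans_eq (abs_of_nonneg hK)
  rw [interval_average_eq, smul_eq_mul] at havg
  have hpos : 0 < b - a := sub_pos.mpr hab
  rw [intervalIntegral.integral_add (hh.continuous.abs.intervalIntegrable _ _)
    ((hh.continuous_deriv le_rfl).abs.intervalIntegrable _ _)]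
  calc (b - a) * |h c| ≤ (b - a) * ((b - a)⁻¹ * ∫ z in a..b, |h z|) + (b - a) * K := by
        rw [← mul_add]; gcongr; linarith [(abs_le.mp havg).1]
    _ ≤ (∫ z in a..b, |h z|) + K := by
        rw [mul_inv_cancel_left₀ hpos.ne']; gcongr; nlinarith

noncomputable def localW11Norm (h : ℝ → ℝ) (α y : ℝ) : ℝ :=
  ∫ t in Icc (-α) α, (|h (y + t)| + |deriv h (y + t)|)

theorem localW11Norm_eq_intervalIntegral (h : ℝ → ℝ) {α : ℝ} (hα : 0 ≤ α) (y : ℝ) :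
    localW11Norm h α y = ∫ z in y - α..y + α, (|h z| + |deriv h z|) := by
  rw [localW11Norm, integral_Icc_eq_integral_Ioc, ← intervalIntegral.integral_of_le (by linarith),
    intervalIntegral.integral_comp_add_left (fun z => |h z| + |deriv h z|), ← sub_eq_add_neg]

theorem integral_abs_deriv_le_localW11Norm {h : ℝ → ℝ} (hh : ContDiff ℝ 1 h) {α : ℝ}
    (hα : 0 ≤ α) (y : ℝ) : ∫ z in y - α..y + α, |deriv h z| ≤ localW11Norm h α y := by
  rw [localW11Norm_eq_intervalIntegral h hα]
  exact intervalIntegral.integral_mono_on (by linarith)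
    ((hh.continuous_deriv le_rfl).abs.intervalIntegrable _ _)
    ((hh.continuous.abs.add (hh.continuous_deriv le_rfl).abs).intervalIntegrable _ _)
    fun z _ => le_add_of_nonneg_left (abs_nonneg _)

theorem min_one_mul_abs_le_localW11Norm {h : ℝ → ℝ} (hh : ContDiff ℝ 1 h) {α : ℝ} (hα : 0 < α)
    (y : ℝ) : min α 1 * |h y| ≤ localW11Norm h α y := by
  set m := min α 1
  have hm : 0 < m := lt_min hα one_pos
  have hwindow := sub_mul_abs_le_integral_abs_add_abs_deriv hh (a := y) (b := y + m) (c := y)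
    (by linarith) (by simp [m]) left_mem_uIcc
  rw [add_sub_cancel_left] at hwindow
  rw [localW11Norm_eq_intervalIntegral h hα.le]
  exact hwindow.trans <| intervalIntegral.integral_mono_interval (by linarith) (by linarith)
    (by linarith [min_le_left α 1]) (Eventually.of_forall fun _ => by positivity)
    ((hh.continuous.abs.add (hh.continuous_deriv le_rfl).abs).intervalIntegrable _ _)

theorem Real.lipschitzWith_arctan : LipschitzWith 1 arctan := by
  refine lipschitzWith_of_nnnorm_deriv_le differentiable_arctan fun x => ?_
  rw [← NNReal.coe_le_coe, coe_nnnorm, Real.norm_eq_abs, deriv_arctan, NNReal.coe_one,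
    abs_of_pos (by positivity)]
  exact (div_le_one (by positivity)).mpr (le_add_of_nonneg_right (sq_nonneg x))

theorem continuous_Ls (s : ℝ) : Continuous (Ls s) :=
  continuous_const.mul (continuous_arctan.comp (continuous_const.mul continuous_id))

theorem abs_Ls_le {s : ℝ} (hs : 0 ≤ s) (x : ℝ) : |Ls s x| ≤ s := by
  rw [Ls, abs_mul, abs_of_nonneg (by positivity : 0 ≤ 2 * s / π)]
  calc 2 * s / π * |arctan ((1 + s ^ 2 / 3) * x)| ≤ 2 * s / π * (π / 2) := by
        gcongr
        exact abs_le.mpr ⟨(neg_pi_div_two_lt_arctan _).le, (arctan_lt_pi_div_two _).le⟩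
    _ = s := by field_simp

theorem abs_Ls_sub_Ls_le {s : ℝ} (hs : 0 ≤ s) (hs1 : s ≤ 1) (x z : ℝ) :
    |Ls s x - Ls s z| ≤ s * |x - z| := by
  have harctan := Real.lipschitzWith_arctan.dist_le_mul ((1 + s ^ 2 / 3) * x)
    ((1 + s ^ 2 / 3) * z)
  rw [NNReal.coe_one, one_mul, Real.dist_eq, Real.dist_eq, ← mul_sub, abs_mul,
    abs_of_pos (by positivity : (0 : ℝ) < 1 + s ^ 2 / 3)] at harctan
  rw [Ls, Ls, ← mul_sub, abs_mul, abs_of_nonneg (by positivity : 0 ≤ 2 * s / π)]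
  have hconst : 2 * s / π * (1 + s ^ 2 / 3) ≤ s := by
    rw [div_mul_eq_mul_div, div_le_iff₀ pi_pos]
    nlinarith [pi_gt_three, mul_le_mul_of_nonneg_left (pow_le_one₀ hs hs1 : s ^ 2 ≤ 1) hs]
  calc 2 * s / π * |arctan ((1 + s ^ 2 / 3) * x) - arctan ((1 + s ^ 2 / 3) * z)|
      ≤ 2 * s / π * ((1 + s ^ 2 / 3) * |x - z|) := by gcongr
    _ ≤ s * |x - z| := by rw [← mul_assoc]; gcongr

theorem abs_fint_Ls_sub_Ls_le {s : ℝ} (hs : 0 ≤ s) (hs1 : s ≤ 1) {α : ℝ} (hα : α ≠ 0) (y : ℝ) :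
    |fint α (Ls s) y - Ls s y| ≤ 2 * s * min |α| 1 := by
  refine abs_fint_sub_le hα ((continuous_Ls s).intervalIntegrable _ _) fun x hx => ?_
  have hxy : |x - y| ≤ |α| := by
    simpa [abs_sub_comm] using abs_sub_right_of_mem_uIcc hx
  rw [mul_min_of_nonneg _ _ (by positivity), mul_one]
  refine le_min ((abs_Ls_sub_Ls_le hs hs1 x y).trans ?_) ?_
  · nlinarith [abs_nonneg α]
  · linarith [abs_sub (Ls s x) (Ls s y), abs_Ls_le hs x, abs_Ls_le hs y]

theorem abs_Jop_le {f g : ℝ → ℝ} {α y D E M : ℝ}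
    (hf : |fint α f y - f y| + |fint (-α) f y - f y| ≤ D)
    (hg : |fint α g y - g y| + |fint (-α) g y - g y| ≤ E)
    (hM : |fint α g y| ≤ M) (hM' : |fint (-α) g y| ≤ M) :
    |Jop α f g y| ≤ D * M + |f y| * E := by
  set A := fint α f y
  set A' := fint (-α) f y
  set B := fint α g y
  set B' := fint (-α) g y
  have hsplit : Jop α f g y
      = (A - f y) * B + (A' - f y) * B' + f y * ((B - g y) + (B' - g y)) := by
    simp only [Jop, A, A', B, B']; ring
  rw [hsplit]
  calc _ ≤ |A - f y| * |B| + |A' - f y| * |B'| + |f y| * (|B - g y| + |B' - g y|) := by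
        grw [abs_add_le, abs_add_le, abs_mul, abs_mul, abs_mul, abs_add_le]
    _ ≤ |A - f y| * M + |A' - f y| * M + |f y| * E := by gcongr
    _ ≤ D * M + |f y| * E := by
        rw [← add_mul]; gcongr; exact (abs_nonneg _).trans hM

theorem abs_Jop_Ls_le {s : ℝ} (hs : 0 < s) (hs1 : s ≤ 1) {h : ℝ → ℝ} (hh : ContDiff ℝ 1 h)
    {α : ℝ} (hα : 0 < α) (y : ℝ) : |Jop α h (Ls s) y| ≤ 5 * s * localW11Norm h α y := by
  have hLs : |fint α (Ls s) y - Ls s y| + |fint (-α) (Ls s) y - Ls s y|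
      ≤ 2 * s * min α 1 + 2 * s * min α 1 := by
    have hpos := abs_fint_Ls_sub_Ls_le hs.le hs1 hα.ne' y
    have hneg := abs_fint_Ls_sub_Ls_le hs.le hs1 (neg_ne_zero.mpr hα.ne') y
    rw [abs_neg] at hneg
    rw [abs_of_pos hα] at hpos hneg
    exact add_le_add hpos hneg
  calc |Jop α h (Ls s) y|
      ≤ (∫ z in y - α..y + α, |deriv h z|) * s + |h y| * (2 * s * min α 1 + 2 * s * min α 1) :=
        abs_Jop_le (abs_fint_sub_self_add_abs_fint_neg_sub_self_le hh hα y) hLs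
          (abs_fint_le (continuous_Ls s) (abs_Ls_le hs.le) hα.ne' y)
          (abs_fint_le (continuous_Ls s) (abs_Ls_le hs.le) (neg_ne_zero.mpr hα.ne') y)
    _ = s * (∫ z in y - α..y + α, |deriv h z|) + 4 * s * (min α 1 * |h y|) := by ring
    _ ≤ s * localW11Norm h α y + 4 * s * localW11Norm h α y := by
        gcongr
        · exact integral_abs_deriv_le_localW11Norm hh hα.le y
        · exact min_one_mul_abs_le_localW11Norm hh hα y
    _ = 5 * s * localW11Norm h α y := by ring

theorem abs_Jop_le_of_abs_le {h₁ h₂ : ℝ → ℝ} (hh₁ : ContDiff ℝ 1 h₁) (hh₂ : ContDiff ℝ 1 h₂)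
    {M₁ M₂ : ℝ} (hM₁ : ∀ x, |h₁ x| ≤ M₁) (hM₂ : ∀ x, |h₂ x| ≤ M₂) {α : ℝ} (hα : 0 < α) (y : ℝ) :
    |Jop α h₁ h₂ y| ≤ M₁ * localW11Norm h₂ α y + M₂ * localW11Norm h₁ α y := by
  have hM₁_nonneg : 0 ≤ M₁ := (abs_nonneg _).trans (hM₁ 0)
  calc |Jop α h₁ h₂ y|
      ≤ (∫ z in y - α..y + α, |deriv h₁ z|) * M₂ + |h₁ y| * ∫ z in y - α..y + α, |deriv h₂ z| :=
        abs_Jop_le (abs_fint_sub_self_add_abs_fint_neg_sub_self_le hh₁ hα y)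
          (abs_fint_sub_self_add_abs_fint_neg_sub_self_le hh₂ hα y)
          (abs_fint_le hh₂.continuous hM₂ hα.ne' y)
          (abs_fint_le hh₂.continuous hM₂ (neg_ne_zero.mpr hα.ne') y)
    _ ≤ localW11Norm h₁ α y * M₂ + M₁ * localW11Norm h₂ α y := by
        have hM₂_nonneg : 0 ≤ M₂ := (abs_nonneg _).trans (hM₂ 0)
        have hK₂_nonneg : 0 ≤ ∫ z in y - α..y + α, |deriv h₂ z| :=
          intervalIntegral.integral_nonneg (by linarith) fun _ _ => abs_nonneg _
        gcongr
        · exact integral_abs_deriv_le_localW11Norm hh₁ hα.le y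
        · exact hM₁ y
        · exact integral_abs_deriv_le_localW11Norm hh₂ hα.le y
    _ = M₁ * localW11Norm h₂ α y + M₂ * localW11Norm h₁ α y := by ring

/-- Integral-form bounds on the bilinear brick `J_α[h, L_s]` and `J_α[h₁, h₂]`. -/
theorem Jop_bilinear_bounds :
    ∃ C : ℝ, 0 < C ∧ ∀ α : ℝ, 0 < α → ∀ y : ℝ,
      (∀ s : ℝ, 0 < s → s ≤ 1 → ∀ h : ℝ → ℝ, ContDiff ℝ 1 h →
          LocallyIntegrable h → LocallyIntegrable (deriv h) →
        |Jop α h (Ls s) y| ≤ C * s *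
          ∫ t in Set.Icc (-α) α, (|h (y + t)| + |deriv h (y + t)|)) ∧
      (∀ h₁ h₂ : ℝ → ℝ, ContDiff ℝ 1 h₁ → ContDiff ℝ 1 h₂ →
          ∀ M₁ M₂ : ℝ, (∀ x : ℝ, |h₁ x| ≤ M₁) → (∀ x : ℝ, |h₂ x| ≤ M₂) →
        |Jop α h₁ h₂ y| ≤ C *
          (M₁ * (∫ t in Set.Icc (-α) α, (|h₂ (y + t)| + |deriv h₂ (y + t)|))
            + M₂ * ∫ t in Set.Icc (-α) α, (|h₁ (y + t)| + |deriv h₁ (y + t)|))) := by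
  refine ⟨5, by norm_num, fun α hα y => ⟨?_, ?_⟩⟩
  · intro s hs hs1 h hh _ _
    exact abs_Jop_Ls_le hs hs1 hh hα y
  · intro h₁ h₂ hh₁ hh₂ M₁ M₂ hM₁ hM₂
    have hJ := abs_Jop_le_of_abs_le hh₁ hh₂ hM₁ hM₂ hα y
    exact hJ.trans (le_mul_of_one_le_left ((abs_nonneg _).trans hJ) (by norm_num))
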